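/- Let 0 → A → B → C → 0 be a short exact sequence of left R-modules. If any two of A, B, C have finite X-Gorenstein projective dimension, then so does the third. -/

import Mathlib

open CategoryTheory DirectSum

universe u

/-- An `𝒳`-complete projective resolution: a doubly infinite exact sequence of
projective `R`-modules that remains exact after applying `Hom_R(-, Y)`
for every `Y` in the class `𝒳`. -/
structure XCompleteResolution (R : Type u) [Ring R] (𝒳 : ModuleCat.{u} R → Prop) where
  P : ℤ → ModuleCat.{u} R
  d : ∀ n : ℤ, P n →ₗ[R] P (n + 1)
  projective : ∀ n, Module.Projective R (P n)
  exact : ∀ n, Function.Exact (d n) (d (n + 1))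
  homExact : ∀ (Y : ModuleCat.{u} R), 𝒳 Y → ∀ n : ℤ,
    Function.Exact (fun f : P (n + 1 + 1) →ₗ[R] Y => f ∘ₗ d (n + 1))
      (fun f : P (n + 1) →ₗ[R] Y => f ∘ₗ d n)

/-- `G` is `𝒳`-Gorenstein projective: it is a kernel in an `𝒳`-complete
projective resolution. -/
def XGorensteinProjective (R : Type u) [Ring R] (𝒳 : ModuleCat.{u} R → Prop)
    (G : ModuleCat.{u} R) : Prop :=
  ∃ C : XCompleteResolution R 𝒳, Nonempty (G ≃ₗ[R] LinearMap.ker (C.d 0))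

/-- `ResWithKernel R 𝒞 n K M` says that there is an exact sequence
`0 → K → G_{n-1} → ⋯ → G_0 → M → 0` in which every `G_i` belongs to the class `𝒞`. -/
def ResWithKernel (R : Type u) [Ring R] (𝒞 : ModuleCat.{u} R → Prop) :
    ℕ → ModuleCat.{u} R → ModuleCat.{u} R → Prop
  | 0, K, M => Nonempty (K ≃ₗ[R] M)
  | n + 1, K, M => ∃ (G L : ModuleCat.{u} R) (f : L →ₗ[R] G) (g : G →ₗ[R] M),
      𝒞 G ∧ Function.Injective f ∧ Function.Surjective g ∧ Function.Exact f g ∧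
      ResWithKernel R 𝒞 n K L

/-- The resolution dimension of `M` with respect to a class `𝒞` of modules:
the least length of a resolution of `M` by modules in `𝒞` (`⊤` if none exists). -/
noncomputable def relDim (R : Type u) [Ring R] (𝒞 : ModuleCat.{u} R → Prop)
    (M : ModuleCat.{u} R) : ℕ∞ :=
  sInf {n : ℕ∞ | ∃ m : ℕ, n = m ∧ ∃ K, 𝒞 K ∧ ResWithKernel R 𝒞 m K M}

/-- The `𝒳`-Gorenstein projective dimension of `M`. -/
noncomputable def xGpd (R : Type u) [Ring R] (𝒳 : ModuleCat.{u} R → Prop)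
    (M : ModuleCat.{u} R) : ℕ∞ :=
  relDim R (XGorensteinProjective R 𝒳) M

/-- The projective dimension of `M`. -/
noncomputable def pdim (R : Type u) [Ring R] (M : ModuleCat.{u} R) : ℕ∞ :=
  relDim R (fun N => Module.Projective R N) M

/-- The Gorenstein projective dimension of `M`:
the `𝒳`-Gorenstein projective dimension for `𝒳` the class of projective modules. -/
noncomputable def gpd (R : Type u) [Ring R] (M : ModuleCat.{u} R) : ℕ∞ :=
  xGpd R (fun N => Module.Projective R N) M


/-!
Call a class `𝒢` of modules *closed* if every `M ∈ 𝒢` sits in short exact sequences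
`0 → M → P → N → 0` and `0 → K → P' → M → 0` with `P, P'` projective and `N, K ∈ 𝒢`, and
`Ext¹(M, Y) = 0` for all `Y ∈ 𝒳`. Splicing these sequences along `ℤ` gives an `𝒳`-complete
resolution through `M`, so closed classes consist of `𝒳`-Gorenstein projectives. The kernels of
complete resolutions, the projectives, and (by the horseshoe lemma) the extensions of two
Gorenstein projectives form closed classes; for the last one the cosyzygy step needs
`Ext¹(C, P) = 0` for projective `P`, which is where `𝒳` must contain the projectives.

For `0 → A → B → C → 0`, the middle term is handled by induction on the length of a resolution
of `C`, pulling back along its first step; the base case, `C` Gorenstein projective, goes by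
induction on the length for `A`, using the horseshoe lemma against a projective syzygy of `C`.
For `C`, pull a resolution of `B` back to `A`. For `A`, cover `C` by a projective `Q` with kernel
of finite dimension: the pullback `0 → A → X → Q → 0` splits, so `A` is a cokernel of `Q → X`.
-/

open Function

universe v

section ShortExact

variable {R : Type*} [Ring R] {A B C : Type*}
  [AddCommGroup A] [Module R A] [AddCommGroup B] [Module R B] [AddCommGroup C] [Module R C]

structure IsShortExact (f : A →ₗ[R] B) (g : B →ₗ[R] C) : Prop where
  injective : Injective f
  surjective : Surjective g
  exact : Exact f g

namespace IsShortExact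

variable {f : A →ₗ[R] B} {g : B →ₗ[R] C}

theorem comp_linearEquiv {A' : Type*} [AddCommGroup A'] [Module R A'] (h : IsShortExact f g)
    (e : A' ≃ₗ[R] A) : IsShortExact (f ∘ₗ (e : A' →ₗ[R] A)) g :=
  ⟨h.injective.comp e.injective, h.surjective, LinearEquiv.precomp_exact_iff_exact.mpr h.exact⟩

theorem linearEquiv_comp {C' : Type*} [AddCommGroup C'] [Module R C'] (h : IsShortExact f g)
    (e : C ≃ₗ[R] C') : IsShortExact f ((e : C →ₗ[R] C') ∘ₗ g) :=
  ⟨h.injective, e.surjective.comp h.surjective, LinearEquiv.postcomp_exact_iff_exact.mpr h.exact⟩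

end IsShortExact

theorem isShortExact_subtype_ker {g : B →ₗ[R] C} (hg : Surjective g) :
    IsShortExact (LinearMap.ker g).subtype g :=
  ⟨(LinearMap.ker g).injective_subtype, hg, LinearMap.exact_subtype_ker_map g⟩

theorem isShortExact_mkQ_range {f : A →ₗ[R] B} (hf : Injective f) :
    IsShortExact f (LinearMap.range f).mkQ :=
  ⟨hf, (LinearMap.range f).mkQ_surjective, LinearMap.exact_map_mkQ_range f⟩

theorem isShortExact_inl_snd : IsShortExact (LinearMap.inl R A C) (LinearMap.snd R A C) :=
  ⟨LinearMap.inl_injective, LinearMap.snd_surjective, Exact.inl_snd⟩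

theorem isShortExact_inr_fst : IsShortExact (LinearMap.inr R A C) (LinearMap.fst R A C) :=
  ⟨LinearMap.inr_injective, LinearMap.fst_surjective, Exact.inr_fst⟩

theorem LinearMap.exists_comp_eq_of_surjective {Y : Type*} [AddCommGroup Y] [Module R Y]
    {p : A →ₗ[R] B} (hp : Surjective p) {g : A →ₗ[R] Y} (h : LinearMap.ker p ≤ LinearMap.ker g) :
    ∃ φ : B →ₗ[R] Y, φ ∘ₗ p = g :=
  ⟨(LinearMap.ker p).liftQ g h ∘ₗ (p.quotKerEquivOfSurjective hp).symm, by ext; simp⟩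

theorem LinearMap.exists_comp_eq_of_injective {X : Type*} [AddCommGroup X] [Module R X]
    {i : A →ₗ[R] B} (hi : Injective i) {h : X →ₗ[R] B}
    (hr : LinearMap.range h ≤ LinearMap.range i) :
    ∃ φ : X →ₗ[R] A, i ∘ₗ φ = h :=
  ⟨(LinearEquiv.ofInjective i hi).symm ∘ₗ h.codRestrict _ fun x => hr ⟨x, rfl⟩, by ext; simp⟩

theorem IsShortExact.exists_swap_of_projective [Module.Projective R C] {f : A →ₗ[R] B}
    {g : B →ₗ[R] C} (h : IsShortExact f g) :
    ∃ (s : C →ₗ[R] B) (r : B →ₗ[R] A), IsShortExact s r := by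
  obtain ⟨s, hs⟩ := Module.projective_lifting_property g LinearMap.id h.surjective
  obtain ⟨e, -⟩ := h.exact.splitSurjectiveEquiv h.injective ⟨s, hs⟩
  have hsplit := isShortExact_inr_fst (R := R) (A := A) (C := C)
  refine ⟨e.symm ∘ₗ LinearMap.inr R A C, LinearMap.fst R A C ∘ₗ e,
    e.symm.injective.comp hsplit.injective, hsplit.surjective.comp e.surjective, ?_⟩
  simpa using (LinearEquiv.conj_exact_iff_exact _ _ e.symm).mpr hsplit.exact

end ShortExact

section SpliceHom

variable {R : Type*} [Ring R] {P₀ M P₁ N P₂ Y : Type*}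
  [AddCommGroup P₀] [Module R P₀] [AddCommGroup M] [Module R M] [AddCommGroup P₁] [Module R P₁]
  [AddCommGroup N] [Module R N] [AddCommGroup P₂] [Module R P₂] [AddCommGroup Y] [Module R Y]

theorem exact_precomp_splice {π₀ : P₀ →ₗ[R] M} {ι₁ : M →ₗ[R] P₁} {π₁ : P₁ →ₗ[R] N}
    {ι₂ : N →ₗ[R] P₂} (hπ₀ : Surjective π₀) (hπ₁ : Surjective π₁) (hex : Exact ι₁ π₁)
    (hext : ∀ φ : N →ₗ[R] Y, ∃ Φ : P₂ →ₗ[R] Y, Φ ∘ₗ ι₂ = φ) :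
    Exact (fun f : P₂ →ₗ[R] Y => f ∘ₗ ι₂ ∘ₗ π₁) (fun f : P₁ →ₗ[R] Y => f ∘ₗ ι₁ ∘ₗ π₀) := by
  intro g
  constructor
  · intro hg
    have hker : LinearMap.ker π₁ ≤ LinearMap.ker g := by
      rw [hex.linearMap_ker_eq]
      rintro _ ⟨m, rfl⟩
      obtain ⟨x, rfl⟩ := hπ₀ m
      exact LinearMap.congr_fun hg x
    obtain ⟨φ, rfl⟩ := LinearMap.exists_comp_eq_of_surjective hπ₁ hker
    obtain ⟨Φ, rfl⟩ := hext φ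
    exact ⟨Φ, rfl⟩
  · rintro ⟨Φ, rfl⟩
    ext x
    simp [hex.apply_apply_eq_zero]

end SpliceHom

section Snake

variable {R : Type*} [Ring R] {A B C A₁ B₁ C₁ X Z : Type*}
  [AddCommGroup A] [Module R A] [AddCommGroup B] [Module R B] [AddCommGroup C] [Module R C]
  [AddCommGroup A₁] [Module R A₁] [AddCommGroup B₁] [Module R B₁] [AddCommGroup C₁] [Module R C₁]
  [AddCommGroup X] [Module R X] [AddCommGroup Z] [Module R Z]
  {f : A →ₗ[R] B} {g : B →ₗ[R] C} {f₁ : A₁ →ₗ[R] B₁} {g₁ : B₁ →ₗ[R] C₁}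
  {a : A →ₗ[R] A₁} {b : B →ₗ[R] B₁} {c : C →ₗ[R] C₁}

-- The two halves of the snake lemma for a morphism of short exact sequences whose outer
-- components are injective, resp. surjective.
theorem IsShortExact.exists_isShortExact_coker (h : IsShortExact f g) (h₁ : IsShortExact f₁ g₁)
    (hab : b ∘ₗ f = f₁ ∘ₗ a) (hbc : c ∘ₗ g = g₁ ∘ₗ b) {a' : A₁ →ₗ[R] X} {c' : C₁ →ₗ[R] Z}
    (ha : IsShortExact a a') (hc : IsShortExact c c') :
    Injective b ∧ ∃ (α : X →ₗ[R] B₁ ⧸ LinearMap.range b) (β : B₁ ⧸ LinearMap.range b →ₗ[R] Z),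
      IsShortExact α β := by
  have hab' : ∀ x, b (f x) = f₁ (a x) := LinearMap.congr_fun hab
  have hbc' : ∀ x, c (g x) = g₁ (b x) := LinearMap.congr_fun hbc
  have key : ∀ x y, b x = f₁ y → ∃ z, x = f z ∧ y = a z := by
    intro x y hxy
    have hgx : g x = 0 := by
      rw [← map_eq_zero_iff c hc.injective, hbc', hxy, h₁.exact.apply_apply_eq_zero]
    obtain ⟨z, rfl⟩ := (h.exact x).mp hgx
    exact ⟨z, rfl, h₁.injective (by rw [← hab', hxy])⟩
  refine ⟨(injective_iff_map_eq_zero b).mpr fun x hx => ?_, ?_⟩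
  · obtain ⟨z, rfl, hz⟩ := key x 0 (by rw [hx, map_zero])
    rw [(injective_iff_map_eq_zero a).mp ha.injective z hz.symm, map_zero]
  obtain ⟨α, hα⟩ := LinearMap.exists_comp_eq_of_surjective ha.surjective
    (g := (LinearMap.range b).mkQ ∘ₗ f₁) <| by
      rw [ha.exact.linearMap_ker_eq]
      rintro _ ⟨y, rfl⟩
      simp [← hab']
  have hα' : ∀ y, α (a' y) = Submodule.Quotient.mk (f₁ y) := LinearMap.congr_fun hα
  let β := (LinearMap.range b).liftQ (c' ∘ₗ g₁) <| by
    rintro _ ⟨x, rfl⟩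
    simp [← hbc', hc.exact.apply_apply_eq_zero]
  refine ⟨α, β, (injective_iff_map_eq_zero α).mpr fun u hu => ?_, ?_, fun w => ?_⟩
  · obtain ⟨y, rfl⟩ := ha.surjective u
    rw [hα', Submodule.Quotient.mk_eq_zero] at hu
    obtain ⟨x, hx⟩ := hu
    obtain ⟨z, -, rfl⟩ := key x y hx
    exact ha.exact.apply_apply_eq_zero z
  · exact LinearMap.surjective_range_liftQ _ (hc.surjective.comp h₁.surjective)
  obtain ⟨x, rfl⟩ := Submodule.Quotient.mk_surjective _ w
  constructor
  · intro hx
    obtain ⟨w, hw⟩ := (hc.exact (g₁ x)).mp hx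
    obtain ⟨v, rfl⟩ := h.surjective w
    obtain ⟨y, hy⟩ := (h₁.exact (x - b v)).mp (by rw [map_sub, ← hbc', hw, sub_self])
    refine ⟨a' y, ?_⟩
    rw [hα', hy, Submodule.Quotient.eq]
    simp
  · rintro ⟨u, hu⟩
    obtain ⟨y, rfl⟩ := ha.surjective u
    rw [← hu, hα']
    simp [β, h₁.exact.apply_apply_eq_zero]

theorem IsShortExact.exists_isShortExact_ker (h : IsShortExact f g) (h₁ : IsShortExact f₁ g₁)
    (hab : b ∘ₗ f = f₁ ∘ₗ a) (hbc : c ∘ₗ g = g₁ ∘ₗ b) {a₀ : X →ₗ[R] A} {c₀ : Z →ₗ[R] C}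
    (ha : IsShortExact a₀ a) (hc : IsShortExact c₀ c) :
    Surjective b ∧ ∃ (α : X →ₗ[R] LinearMap.ker b) (β : LinearMap.ker b →ₗ[R] Z),
      IsShortExact α β := by
  have hab' : ∀ x, b (f x) = f₁ (a x) := LinearMap.congr_fun hab
  have hbc' : ∀ x, c (g x) = g₁ (b x) := LinearMap.congr_fun hbc
  have key : ∀ y, g₁ y = 0 → ∃ u, b (f u) = y := by
    intro y hy
    obtain ⟨w, rfl⟩ := (h₁.exact y).mp hy
    obtain ⟨u, rfl⟩ := ha.surjective w
    exact ⟨u, hab' u⟩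
  refine ⟨fun y => ?_, ?_⟩
  · obtain ⟨x, hx⟩ := (hc.surjective.comp h.surjective) (g₁ y)
    obtain ⟨u, hu⟩ := key (y - b x) (by simp only [map_sub, ← hbc']; exact sub_eq_zero.mpr hx.symm)
    exact ⟨x + f u, by rw [map_add, hu, add_sub_cancel]⟩
  have hα : ∀ u, f (a₀ u) ∈ LinearMap.ker b := fun u => by
    simp [hab', ha.exact.apply_apply_eq_zero]
  obtain ⟨β, hβ⟩ := LinearMap.exists_comp_eq_of_injective hc.injective
    (h := g ∘ₗ (LinearMap.ker b).subtype) <| by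
      rw [← hc.exact.linearMap_ker_eq]
      rintro _ ⟨k, rfl⟩
      simp [hbc']
  have hβ' : ∀ k, c₀ (β k) = g k := LinearMap.congr_fun hβ
  refine ⟨(f ∘ₗ a₀).codRestrict _ hα, β, fun u u' huu' => ?_, fun w => ?_, fun k => ?_⟩
  · exact ha.injective (h.injective (congrArg Subtype.val huu'))
  · obtain ⟨x, hx⟩ := h.surjective (c₀ w)
    obtain ⟨u, hu⟩ := key (b x) (by rw [← hbc', hx, hc.exact.apply_apply_eq_zero])
    refine ⟨⟨x - f u, by simp [hu]⟩, hc.injective ?_⟩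
    simp [hβ', hx, h.exact.apply_apply_eq_zero]
  rw [← map_eq_zero_iff c₀ hc.injective, hβ']
  constructor
  · intro hk
    obtain ⟨v, hv⟩ := (h.exact k).mp hk
    have hav : a v = 0 := by
      rw [← map_eq_zero_iff f₁ h₁.injective, ← hab', hv, k.2]
    obtain ⟨u, rfl⟩ := (ha.exact v).mp hav
    exact ⟨u, Subtype.ext hv⟩
  · rintro ⟨u, rfl⟩
    exact h.exact.apply_apply_eq_zero (a₀ u)

end Snake

section Diagrams

variable {R : Type*} [Ring R] {A B C L D : Type*}
  [AddCommGroup A] [Module R A] [AddCommGroup B] [Module R B] [AddCommGroup C] [Module R C]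
  [AddCommGroup L] [Module R L] [AddCommGroup D] [Module R D]
  {f : A →ₗ[R] B} {g : B →ₗ[R] C}

theorem isShortExact_zero_id [Subsingleton L] : IsShortExact (0 : L →ₗ[R] A) LinearMap.id :=
  ⟨fun _ _ _ => Subsingleton.elim _ _, surjective_id,
    (LinearMap.exact_zero_iff_injective _ _).mpr injective_id⟩

theorem isShortExact_id_zero [Subsingleton L] : IsShortExact LinearMap.id (0 : A →ₗ[R] L) :=
  ⟨injective_id, fun _ => ⟨0, Subsingleton.elim _ _⟩,
    (LinearMap.exact_zero_iff_surjective _ _).mpr surjective_id⟩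

theorem IsShortExact.exists_isShortExact_ker_comp (hfg : IsShortExact f g) {v : L →ₗ[R] D}
    {w : D →ₗ[R] B} (hvw : IsShortExact v w) :
    ∃ (j : L →ₗ[R] LinearMap.ker (g ∘ₗ w)) (r : LinearMap.ker (g ∘ₗ w) →ₗ[R] A),
      IsShortExact j r ∧ (LinearMap.ker (g ∘ₗ w)).subtype ∘ₗ j = v := by
  have hv : ∀ l, v l ∈ LinearMap.ker (g ∘ₗ w) := fun l => by
    simp [hvw.exact.apply_apply_eq_zero]
  obtain ⟨r, hr⟩ := LinearMap.exists_comp_eq_of_injective hfg.injective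
    (h := w ∘ₗ (LinearMap.ker (g ∘ₗ w)).subtype) <| by
      rw [← hfg.exact.linearMap_ker_eq]
      rintro _ ⟨k, rfl⟩
      exact k.2
  have hr' : ∀ k, f (r k) = w k := LinearMap.congr_fun hr
  refine ⟨v.codRestrict _ hv, r, ⟨fun l l' h => hvw.injective (congrArg Subtype.val h),
    fun x => ?_, fun k => ?_⟩, rfl⟩
  · obtain ⟨d, hd⟩ := hvw.surjective (f x)
    have hdk : d ∈ LinearMap.ker (g ∘ₗ w) := by simp [hd, hfg.exact.apply_apply_eq_zero]
    exact ⟨⟨d, hdk⟩, hfg.injective (by rw [hr', hd])⟩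
  · rw [← map_eq_zero_iff f hfg.injective, hr']
    exact (hvw.exact k).trans ⟨fun ⟨l, hl⟩ => ⟨l, Subtype.ext hl⟩,
      fun ⟨l, hl⟩ => ⟨l, congrArg Subtype.val hl⟩⟩

end Diagrams

section ModuleCatDiagrams

variable {R : Type*} [Ring R] {A B C : ModuleCat.{v} R} {f : A →ₗ[R] B} {g : B →ₗ[R] C}

theorem IsShortExact.exists_pullback (hfg : IsShortExact f g) {L G : ModuleCat.{v} R}
    {ι : L →ₗ[R] G} {p : G →ₗ[R] C} (hιp : IsShortExact ι p) :
    ∃ (X : ModuleCat.{v} R) (a : A →ₗ[R] X) (q : X →ₗ[R] G) (l : L →ₗ[R] X) (r : X →ₗ[R] B),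
      IsShortExact a q ∧ IsShortExact l r := by
  set K := LinearMap.ker (g ∘ₗ LinearMap.fst R B G - p ∘ₗ LinearMap.snd R B G)
  have hK : ∀ z, z ∈ K ↔ g z.1 = p z.2 := fun z => by simp [K, sub_eq_zero]
  have ha : ∀ x, (f x, 0) ∈ K := fun x => by simp [hK, hfg.exact.apply_apply_eq_zero]
  have hl : ∀ y, (0, ι y) ∈ K := fun y => by simp [hK, hιp.exact.apply_apply_eq_zero]
  refine ⟨ModuleCat.of R K, (LinearMap.inl R B G ∘ₗ f).codRestrict K ha,
    LinearMap.snd R B G ∘ₗ K.subtype, (LinearMap.inr R B G ∘ₗ ι).codRestrict K hl,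
    LinearMap.fst R B G ∘ₗ K.subtype, ⟨fun x x' h => ?_, fun y => ?_, ?_⟩,
    ⟨fun y y' h => ?_, fun x => ?_, ?_⟩⟩
  · exact hfg.injective (congrArg (fun z : K => z.1.1) h)
  · obtain ⟨x, hx⟩ := hfg.surjective (p y)
    exact ⟨⟨(x, y), (hK _).mpr hx⟩, rfl⟩
  · rintro ⟨⟨x, y⟩, hz⟩
    refine ⟨fun (hy : y = 0) => ?_, fun ⟨x', hx'⟩ => congrArg (fun z : K => z.1.2) hx'.symm⟩
    subst hy
    obtain ⟨x', rfl⟩ := (hfg.exact x).mp (by simpa using (hK _).mp hz)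
    exact ⟨x', rfl⟩
  · exact hιp.injective (congrArg (fun z : K => z.1.2) h)
  · obtain ⟨y, hy⟩ := hιp.surjective (g x)
    exact ⟨⟨(x, y), (hK _).mpr hy.symm⟩, rfl⟩
  · rintro ⟨⟨x, y⟩, hz⟩
    refine ⟨fun (hx : x = 0) => ?_, fun ⟨y', hy'⟩ => congrArg (fun z : K => z.1.1) hy'.symm⟩
    subst hx
    obtain ⟨y', rfl⟩ := (hιp.exact y).mp (by simpa using ((hK _).mp hz).symm)
    exact ⟨y', rfl⟩

theorem IsShortExact.exists_horseshoe_syzygy (hfg : IsShortExact f g)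
    {A' PA C' PC : ModuleCat.{v} R} [Module.Projective R PC] {ιA : A' →ₗ[R] PA}
    {πA : PA →ₗ[R] A} {ιC : C' →ₗ[R] PC} {πC : PC →ₗ[R] C}
    (hA : IsShortExact ιA πA) (hC : IsShortExact ιC πC) :
    ∃ (K : ModuleCat.{v} R) (κ : K →ₗ[R] PA × PC) (π : PA × PC →ₗ[R] B) (α : A' →ₗ[R] K)
      (β : K →ₗ[R] C'), IsShortExact κ π ∧ IsShortExact α β := by
  obtain ⟨l, hl⟩ := Module.projective_lifting_property g πC hfg.surjective
  set π := (f ∘ₗ πA).coprod l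
  have hπC : πC ∘ₗ LinearMap.snd R PA PC = g ∘ₗ π := by
    ext x <;> simp [π, ← hl, hfg.exact.apply_apply_eq_zero]
  obtain ⟨hπ, α, β, hαβ⟩ :=
    isShortExact_inl_snd.exists_isShortExact_ker hfg (LinearMap.coprod_inl _ _) hπC hA hC
  exact ⟨ModuleCat.of R (LinearMap.ker π), _, π, α, β, isShortExact_subtype_ker hπ, hαβ⟩

theorem IsShortExact.exists_horseshoe_cosyzygy (hfg : IsShortExact f g)
    {PA A'' PC C'' : ModuleCat.{v} R} {ιA : A →ₗ[R] PA} {πA : PA →ₗ[R] A''}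
    {ιC : C →ₗ[R] PC} {πC : PC →ₗ[R] C''} (hA : IsShortExact ιA πA) (hC : IsShortExact ιC πC)
    {φ : B →ₗ[R] PA} (hφ : φ ∘ₗ f = ιA) :
    ∃ (N : ModuleCat.{v} R) (ι : B →ₗ[R] PA × PC) (π : PA × PC →ₗ[R] N) (α : A'' →ₗ[R] N)
      (β : N →ₗ[R] C''), IsShortExact ι π ∧ IsShortExact α β := by
  set ψ := φ.prod (ιC ∘ₗ g)
  have hψf : ψ ∘ₗ f = LinearMap.inl R PA PC ∘ₗ ιA := by
    ext x <;> simp [ψ, ← hφ, hfg.exact.apply_apply_eq_zero]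
  obtain ⟨hψ, α, β, hαβ⟩ :=
    hfg.exists_isShortExact_coker isShortExact_inl_snd hψf (LinearMap.snd_prod _ _).symm hA hC
  exact ⟨ModuleCat.of R (_ ⧸ LinearMap.range ψ), ψ, _, α, β, isShortExact_mkQ_range hψ, hαβ⟩

structure ProjectiveSES (A C : ModuleCat.{v} R) where
  P : ModuleCat.{v} R
  ι : A →ₗ[R] P
  π : P →ₗ[R] C
  projective : Module.Projective R P
  isShortExact : IsShortExact ι π

def ProjectiveSES.compLeft {A A' C : ModuleCat.{v} R} (s : ProjectiveSES A C) (e : A' ≃ₗ[R] A) :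
    ProjectiveSES A' C :=
  { s with ι := s.ι ∘ₗ (e : A' →ₗ[R] A), isShortExact := s.isShortExact.comp_linearEquiv e }

def ProjectiveSES.compRight {A C C' : ModuleCat.{v} R} (s : ProjectiveSES A C) (e : C ≃ₗ[R] C') :
    ProjectiveSES A C' :=
  { s with π := (e : C →ₗ[R] C') ∘ₗ s.π, isShortExact := s.isShortExact.linearEquiv_comp e }

/-- `Ext¹(G, Y) = 0`, in the form: maps into `Y` extend along every extension of `G`. -/
def ExtOneVanishes (G Y : ModuleCat.{v} R) : Prop :=
  ∀ ⦃A E : ModuleCat.{v} R⦄ (f : A →ₗ[R] E) (g : E →ₗ[R] G), IsShortExact f g →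
    ∀ φ : A →ₗ[R] Y, ∃ Φ : E →ₗ[R] Y, Φ ∘ₗ f = φ

/-- Vanishing of `Ext¹(G, Y)` can be tested on a single projective presentation of `G`. -/
theorem extOneVanishes_of_projective_presentation {L P : Type*} [AddCommGroup L] [Module R L]
    [AddCommGroup P] [Module R P] [Module.Projective R P] {G Y : ModuleCat.{v} R}
    {ι : L →ₗ[R] P} {π : P →ₗ[R] G} (hιπ : IsShortExact ι π)
    (hext : ∀ φ : L →ₗ[R] Y, ∃ Φ : P →ₗ[R] Y, Φ ∘ₗ ι = φ) : ExtOneVanishes G Y := by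
  intro A E i g hig φ
  obtain ⟨σ, hσ⟩ := Module.projective_lifting_property g π hig.surjective
  have hσ' : ∀ x, g (σ x) = π x := LinearMap.congr_fun hσ
  obtain ⟨ψ, hψ⟩ := LinearMap.exists_comp_eq_of_injective hig.injective (h := σ ∘ₗ ι) <| by
    rw [← hig.exact.linearMap_ker_eq]
    rintro _ ⟨l, rfl⟩
    simp [hσ', hιπ.exact.apply_apply_eq_zero]
  have hψ' : ∀ l, i (ψ l) = σ (ι l) := LinearMap.congr_fun hψ
  obtain ⟨h, hh⟩ := hext (φ ∘ₗ ψ)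
  have hh' : ∀ l, h (ι l) = φ (ψ l) := LinearMap.congr_fun hh
  -- `E` is covered by `P × A`, and `(h, φ)` vanishes on the kernel of the covering map.
  have hcover : Surjective (σ.coprod i) := fun e => by
    obtain ⟨x, hx⟩ := hιπ.surjective (g e)
    obtain ⟨a, ha⟩ := (hig.exact (e - σ x)).mp (by rw [map_sub, hσ', hx, sub_self])
    exact ⟨(x, a), by simp [ha]⟩
  obtain ⟨Φ, hΦ⟩ := LinearMap.exists_comp_eq_of_surjective hcover (g := h.coprod φ) <| by
    rintro ⟨x, a⟩ hxa
    replace hxa : σ x + i a = 0 := hxa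
    obtain ⟨l, rfl⟩ := (hιπ.exact x).mp <| by
      rw [← hσ', eq_neg_of_add_eq_zero_left hxa, map_neg, hig.exact.apply_apply_eq_zero, neg_zero]
    have ha : a = -ψ l := hig.injective <| by
      rw [map_neg, hψ', eq_neg_iff_add_eq_zero, add_comm, hxa]
    simp [hh', ha]
  exact ⟨Φ, by ext a; simpa using LinearMap.congr_fun hΦ (0, a)⟩

theorem extOneVanishes_of_projective {G Y : ModuleCat.{v} R} [Module.Projective R G] :
    ExtOneVanishes G Y :=
  extOneVanishes_of_projective_presentation (isShortExact_zero_id (L := PUnit.{1})) fun _ =>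
    ⟨0, Subsingleton.elim _ _⟩

theorem ExtOneVanishes.of_isShortExact {Y : ModuleCat.{v} R} (hfg : IsShortExact f g)
    (hA : ExtOneVanishes A Y) (hC : ExtOneVanishes C Y) : ExtOneVanishes B Y := by
  intro K W j π hjπ φ
  obtain ⟨j', r, hj'r, rfl⟩ := hfg.exists_isShortExact_ker_comp hjπ
  obtain ⟨φA, rfl⟩ := hA (E := ModuleCat.of R _) j' r hj'r φ
  obtain ⟨Φ, rfl⟩ := hC (A := ModuleCat.of R _) (LinearMap.ker (g ∘ₗ π)).subtype (g ∘ₗ π)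
    (isShortExact_subtype_ker (hfg.surjective.comp hjπ.surjective)) φA
  exact ⟨Φ, rfl⟩

end ModuleCatDiagrams

section ClosedClass

variable {R : Type u} [Ring R] {𝒳 : ModuleCat.{u} R → Prop} {𝒢 : ModuleCat.{u} R → Prop}
  (hcosyz : ∀ M, 𝒢 M → ∃ N, 𝒢 N ∧ Nonempty (ProjectiveSES M N))
  (hsyz : ∀ M, 𝒢 M → ∃ K, 𝒢 K ∧ Nonempty (ProjectiveSES K M))

noncomputable def cosyzygySeq (M₀ : Subtype 𝒢) : ℕ → Subtype 𝒢
  | 0 => M₀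
  | k + 1 => ⟨_, (hcosyz _ (cosyzygySeq M₀ k).2).choose_spec.1⟩

noncomputable def syzygySeq (M₀ : Subtype 𝒢) : ℕ → Subtype 𝒢
  | 0 => M₀
  | k + 1 => ⟨_, (hsyz _ (syzygySeq M₀ k).2).choose_spec.1⟩

noncomputable def spliceSeq (M₀ : Subtype 𝒢) : ℤ → Subtype 𝒢
  | .ofNat k => cosyzygySeq hcosyz M₀ k
  | .negSucc k => syzygySeq hsyz M₀ (k + 1)

-- Splitting off `negSucc 0` makes `spliceSeq (n + 1)` reduce definitionally in every case.
noncomputable def spliceStep (M₀ : Subtype 𝒢) :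
    (n : ℤ) → ProjectiveSES (spliceSeq hcosyz hsyz M₀ n).1 (spliceSeq hcosyz hsyz M₀ (n + 1)).1
  | .ofNat k => (hcosyz _ (cosyzygySeq hcosyz M₀ k).2).choose_spec.2.some
  | .negSucc 0 => (hsyz _ M₀.2).choose_spec.2.some
  | .negSucc (k + 1) => (hsyz _ (syzygySeq hsyz M₀ (k + 1)).2).choose_spec.2.some

variable (hext : ∀ M, 𝒢 M → ∀ Y, 𝒳 Y → ExtOneVanishes M Y)

noncomputable def spliceResolution (M₀ : Subtype 𝒢) : XCompleteResolution R 𝒳 where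
  P n := (spliceStep hcosyz hsyz M₀ n).P
  d n := (spliceStep hcosyz hsyz M₀ (n + 1)).ι ∘ₗ (spliceStep hcosyz hsyz M₀ n).π
  projective n := (spliceStep hcosyz hsyz M₀ n).projective
  exact n := (spliceStep hcosyz hsyz M₀ n).isShortExact.surjective.comp_exact_iff_exact.mpr <|
    (spliceStep hcosyz hsyz M₀ (n + 1 + 1)).isShortExact.injective.comp_exact_iff_exact.mpr
      (spliceStep hcosyz hsyz M₀ (n + 1)).isShortExact.exact
  homExact Y hY n := exact_precomp_splice (spliceStep hcosyz hsyz M₀ n).isShortExact.surjective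
    (spliceStep hcosyz hsyz M₀ (n + 1)).isShortExact.surjective
    (spliceStep hcosyz hsyz M₀ (n + 1)).isShortExact.exact
    (hext _ (spliceSeq hcosyz hsyz M₀ (n + 1 + 1 + 1)).2 Y hY _ _
      (spliceStep hcosyz hsyz M₀ (n + 1 + 1)).isShortExact)

include hcosyz hsyz hext in
theorem xGorensteinProjective_of_closed {M : ModuleCat.{u} R} (hM : 𝒢 M) :
    XGorensteinProjective R 𝒳 M := by
  set s := spliceStep hcosyz hsyz ⟨M, hM⟩
  have h : Exact (s 0).ι ((spliceResolution hcosyz hsyz hext ⟨M, hM⟩).d 0) :=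
    (s 1).isShortExact.injective.comp_exact_iff_exact.mpr (s 0).isShortExact.exact
  exact ⟨spliceResolution hcosyz hsyz hext ⟨M, hM⟩,
    ⟨(LinearEquiv.ofInjective _ (s 0).isShortExact.injective).trans
      (LinearEquiv.ofEq _ _ h.linearMap_ker_eq.symm)⟩⟩

end ClosedClass

section GorensteinBasics

variable {R : Type u} [Ring R] {𝒳 : ModuleCat.{u} R → Prop}

theorem xGorensteinProjective_of_projective (M : ModuleCat.{u} R) [hM : Module.Projective R M] :
    XGorensteinProjective R 𝒳 M := by
  have h0 : Module.Projective R (ModuleCat.of R PUnit.{u + 1}) := inferInstance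
  refine xGorensteinProjective_of_closed (𝒢 := fun M => Module.Projective R M)
    (fun N hN => ⟨_, h0, ⟨⟨N, LinearMap.id, 0, hN, isShortExact_id_zero⟩⟩⟩)
    (fun N hN => ⟨_, h0, ⟨⟨N, 0, LinearMap.id, hN, isShortExact_zero_id⟩⟩⟩)
    (fun _ hN _ _ => by have := hN; exact extOneVanishes_of_projective) hM

namespace XCompleteResolution

variable (C : XCompleteResolution R 𝒳)

def projectiveSES (n : ℤ) :
    ProjectiveSES (ModuleCat.of R (LinearMap.ker (C.d n)))
      (ModuleCat.of R (LinearMap.ker (C.d (n + 1)))) where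
  P := C.P n
  ι := (LinearMap.ker (C.d n)).subtype
  π := (C.d n).codRestrict _ fun x => LinearMap.mem_ker.mpr ((C.exact n).apply_apply_eq_zero x)
  projective := C.projective n
  isShortExact := by
    refine ⟨(LinearMap.ker (C.d n)).injective_subtype, fun ⟨z, hz⟩ => ?_, ?_⟩
    · obtain ⟨x, rfl⟩ := (C.exact n z).mp hz
      exact ⟨x, rfl⟩
    · exact fun x => Subtype.ext_iff.trans ⟨fun h => ⟨⟨x, h⟩, rfl⟩, fun ⟨y, hy⟩ => hy ▸ y.2⟩

theorem exists_comp_subtype_ker_eq {Y : ModuleCat.{u} R} (hY : 𝒳 Y) (n : ℤ)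
    (φ : LinearMap.ker (C.d n) →ₗ[R] Y) :
    ∃ Φ : C.P n →ₗ[R] Y, Φ ∘ₗ (LinearMap.ker (C.d n)).subtype = φ := by
  obtain ⟨k, rfl⟩ : ∃ k, n = k + 1 + 1 := ⟨n - 1 - 1, by omega⟩
  set π := (C.projectiveSES (k + 1)).π
  have hπ : π ∘ₗ C.d k = 0 :=
    LinearMap.ext fun x => Subtype.ext ((C.exact k).apply_apply_eq_zero x)
  obtain ⟨Φ, hΦ⟩ := (C.homExact Y hY k (φ ∘ₗ π)).mp <|
    LinearMap.ext fun x => (congrArg φ (LinearMap.congr_fun hπ x)).trans (map_zero φ)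
  exact ⟨Φ, (LinearMap.cancel_right (C.projectiveSES (k + 1)).isShortExact.surjective).mp hΦ⟩

theorem extOneVanishes {Y G : ModuleCat.{u} R} (hY : 𝒳 Y) (n : ℤ)
    (e : G ≃ₗ[R] LinearMap.ker (C.d n)) : ExtOneVanishes G Y := by
  obtain ⟨k, rfl⟩ : ∃ k, n = k + 1 := ⟨n - 1, by omega⟩
  set s := (C.projectiveSES k).compRight e.symm
  have := s.projective
  exact extOneVanishes_of_projective_presentation s.isShortExact (C.exists_comp_subtype_ker_eq hY k)

theorem xGorensteinProjective_ker (n : ℤ) :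
    XGorensteinProjective R 𝒳 (ModuleCat.of R (LinearMap.ker (C.d n))) := by
  refine xGorensteinProjective_of_closed
    (𝒢 := fun M => ∃ (C : XCompleteResolution R 𝒳) (n : ℤ),
      Nonempty (M ≃ₗ[R] LinearMap.ker (C.d n))) ?_ ?_ ?_ ⟨C, n, ⟨LinearEquiv.refl _ _⟩⟩
  · rintro M ⟨C, n, ⟨e⟩⟩
    exact ⟨_, ⟨C, n + 1, ⟨LinearEquiv.refl _ _⟩⟩, ⟨(C.projectiveSES n).compLeft e⟩⟩
  · rintro M ⟨C, n, ⟨e⟩⟩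
    obtain ⟨k, rfl⟩ : ∃ k, n = k + 1 := ⟨n - 1, by omega⟩
    exact ⟨_, ⟨C, k, ⟨LinearEquiv.refl _ _⟩⟩, ⟨(C.projectiveSES k).compRight e.symm⟩⟩
  · rintro M ⟨C, n, ⟨e⟩⟩ Y hY
    exact C.extOneVanishes hY n e

end XCompleteResolution

namespace XGorensteinProjective

variable {G : ModuleCat.{u} R} (hG : XGorensteinProjective R 𝒳 G)
include hG

theorem extOneVanishes {Y : ModuleCat.{u} R} (hY : 𝒳 Y) : ExtOneVanishes G Y :=
  let ⟨C, ⟨e⟩⟩ := hG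
  C.extOneVanishes hY 0 e

theorem exists_cosyzygy :
    ∃ N, XGorensteinProjective R 𝒳 N ∧ Nonempty (ProjectiveSES G N) :=
  let ⟨C, ⟨e⟩⟩ := hG
  ⟨_, C.xGorensteinProjective_ker 1, ⟨(C.projectiveSES 0).compLeft e⟩⟩

theorem exists_syzygy :
    ∃ K, XGorensteinProjective R 𝒳 K ∧ Nonempty (ProjectiveSES K G) :=
  let ⟨C, ⟨e⟩⟩ := hG
  ⟨_, C.xGorensteinProjective_ker (-1), ⟨(C.projectiveSES (-1)).compRight e.symm⟩⟩

end XGorensteinProjective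

theorem XGorensteinProjective.of_isShortExact
    (h𝒳 : ∀ P : ModuleCat.{u} R, Module.Projective R P → 𝒳 P)
    {A B C : ModuleCat.{u} R} {f : A →ₗ[R] B} {g : B →ₗ[R] C} (hfg : IsShortExact f g)
    (hA : XGorensteinProjective R 𝒳 A) (hC : XGorensteinProjective R 𝒳 C) :
    XGorensteinProjective R 𝒳 B := by
  refine xGorensteinProjective_of_closed
    (𝒢 := fun E => ∃ (A C : ModuleCat.{u} R) (f : A →ₗ[R] E) (g : E →ₗ[R] C),
      XGorensteinProjective R 𝒳 A ∧ XGorensteinProjective R 𝒳 C ∧ IsShortExact f g)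
    ?_ ?_ ?_ ⟨A, C, f, g, hA, hC, hfg⟩
  · rintro E ⟨A, C, f, g, hA, hC, hfg⟩
    obtain ⟨A'', hA'', ⟨sA⟩⟩ := hA.exists_cosyzygy
    obtain ⟨C'', hC'', ⟨sC⟩⟩ := hC.exists_cosyzygy
    obtain ⟨φ, hφ⟩ := hC.extOneVanishes (h𝒳 _ sA.projective) f g hfg sA.ι
    obtain ⟨N, ι, π, α, β, hιπ, hαβ⟩ :=
      hfg.exists_horseshoe_cosyzygy sA.isShortExact sC.isShortExact hφ
    have := sA.projective
    have := sC.projective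
    exact ⟨N, ⟨A'', C'', α, β, hA'', hC'', hαβ⟩, ⟨⟨ModuleCat.of R _, ι, π, inferInstance, hιπ⟩⟩⟩
  · rintro E ⟨A, C, f, g, hA, hC, hfg⟩
    obtain ⟨A', hA', ⟨sA⟩⟩ := hA.exists_syzygy
    obtain ⟨C', hC', ⟨sC⟩⟩ := hC.exists_syzygy
    have := sA.projective
    have := sC.projective
    obtain ⟨K, κ, π, α, β, hκπ, hαβ⟩ := hfg.exists_horseshoe_syzygy sA.isShortExact sC.isShortExact
    exact ⟨K, ⟨A', C', α, β, hA', hC', hαβ⟩, ⟨⟨ModuleCat.of R _, κ, π, inferInstance, hκπ⟩⟩⟩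
  · rintro E ⟨A, C, f, g, hA, hC, hfg⟩ Y hY
    exact ExtOneVanishes.of_isShortExact hfg (hA.extOneVanishes hY) (hC.extOneVanishes hY)

end GorensteinBasics

section FiniteDimension

variable {R : Type u} [Ring R] (𝒳 : ModuleCat.{u} R → Prop)

def HasGPResolution (n : ℕ) (M : ModuleCat.{u} R) : Prop :=
  ∃ K, XGorensteinProjective R 𝒳 K ∧ ResWithKernel R (XGorensteinProjective R 𝒳) n K M

variable {𝒳}

theorem hasGPResolution_zero_iff {M : ModuleCat.{u} R} :
    HasGPResolution 𝒳 0 M ↔ XGorensteinProjective R 𝒳 M :=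
  ⟨fun ⟨_, ⟨C, ⟨e₀⟩⟩, ⟨e⟩⟩ => ⟨C, ⟨e.symm.trans e₀⟩⟩, fun h => ⟨M, h, ⟨LinearEquiv.refl R M⟩⟩⟩

theorem hasGPResolution_succ_iff {n : ℕ} {M : ModuleCat.{u} R} :
    HasGPResolution 𝒳 (n + 1) M ↔ ∃ (L G : ModuleCat.{u} R) (f : L →ₗ[R] G) (g : G →ₗ[R] M),
      XGorensteinProjective R 𝒳 G ∧ IsShortExact f g ∧ HasGPResolution 𝒳 n L := by
  constructor
  · rintro ⟨K, hK, G, L, f, g, hG, hf, hg, hfg, hL⟩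
    exact ⟨L, G, f, g, hG, ⟨hf, hg, hfg⟩, K, hK, hL⟩
  · rintro ⟨L, G, f, g, hG, ⟨hf, hg, hfg⟩, K, hK, hL⟩
    exact ⟨K, hK, G, L, f, g, hG, hf, hg, hfg, hL⟩

theorem xGpd_ne_top_iff {M : ModuleCat.{u} R} :
    xGpd R 𝒳 M ≠ ⊤ ↔ ∃ n, HasGPResolution 𝒳 n M := by
  simp [xGpd, relDim, sInf_eq_top, HasGPResolution]

theorem XGorensteinProjective.xGpd_ne_top {M : ModuleCat.{u} R}
    (hM : XGorensteinProjective R 𝒳 M) : xGpd R 𝒳 M ≠ ⊤ :=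
  xGpd_ne_top_iff.mpr ⟨0, hasGPResolution_zero_iff.mpr hM⟩

variable {A B C : ModuleCat.{u} R} {f : A →ₗ[R] B} {g : B →ₗ[R] C}

theorem IsShortExact.xGpd_ne_top_right_of_xGorensteinProjective (hfg : IsShortExact f g)
    (hB : XGorensteinProjective R 𝒳 B) (hA : xGpd R 𝒳 A ≠ ⊤) : xGpd R 𝒳 C ≠ ⊤ :=
  let ⟨n, hn⟩ := xGpd_ne_top_iff.mp hA
  xGpd_ne_top_iff.mpr ⟨n + 1, hasGPResolution_succ_iff.mpr ⟨A, B, f, g, hB, hfg, hn⟩⟩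

theorem exists_isShortExact_of_xGpd_ne_top (hC : xGpd R 𝒳 C ≠ ⊤) :
    ∃ (L G : ModuleCat.{u} R) (ι : L →ₗ[R] G) (p : G →ₗ[R] C),
      XGorensteinProjective R 𝒳 G ∧ xGpd R 𝒳 L ≠ ⊤ ∧ IsShortExact ι p := by
  obtain ⟨_ | n, hn⟩ := xGpd_ne_top_iff.mp hC
  · exact ⟨ModuleCat.of R PUnit, C, 0, LinearMap.id, hasGPResolution_zero_iff.mp hn,
      (xGorensteinProjective_of_projective _).xGpd_ne_top, isShortExact_zero_id⟩
  · obtain ⟨L, G, ι, p, hG, hιp, hL⟩ := hasGPResolution_succ_iff.mp hn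
    exact ⟨L, G, ι, p, hG, xGpd_ne_top_iff.mpr ⟨n, hL⟩, hιp⟩

theorem IsShortExact.xGpd_ne_top_right_of_hasGPResolution {k : ℕ}
    (hmid : ∀ ⦃A B C : ModuleCat.{u} R⦄ {f : A →ₗ[R] B} {g : B →ₗ[R] C}, IsShortExact f g →
      xGpd R 𝒳 A ≠ ⊤ → HasGPResolution 𝒳 k C → xGpd R 𝒳 B ≠ ⊤)
    (hfg : IsShortExact f g) (hA : HasGPResolution 𝒳 k A) (hB : xGpd R 𝒳 B ≠ ⊤) :
    xGpd R 𝒳 C ≠ ⊤ := by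
  obtain ⟨L, G, v, w, hG, hL, hvw⟩ := exists_isShortExact_of_xGpd_ne_top hB
  obtain ⟨j, r, hjr, -⟩ := hfg.exists_isShortExact_ker_comp hvw
  exact (isShortExact_subtype_ker (g := g ∘ₗ w) (hfg.surjective.comp hvw.surjective)
    ).xGpd_ne_top_right_of_xGorensteinProjective hG (hmid (B := ModuleCat.of R _) hjr hL hA)

variable (h𝒳 : ∀ P : ModuleCat.{u} R, Module.Projective R P → 𝒳 P)
include h𝒳

theorem IsShortExact.xGpd_ne_top_mid_of_xGorensteinProjective (hfg : IsShortExact f g)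
    (hA : xGpd R 𝒳 A ≠ ⊤) (hC : XGorensteinProjective R 𝒳 C) : xGpd R 𝒳 B ≠ ⊤ := by
  obtain ⟨m, hm⟩ := xGpd_ne_top_iff.mp hA
  clear hA
  induction m generalizing A B C with
  | zero =>
    exact (XGorensteinProjective.of_isShortExact h𝒳 hfg (hasGPResolution_zero_iff.mp hm) hC
      ).xGpd_ne_top
  | succ m ih =>
    obtain ⟨L, G, ιA, πA, hG, hA, hL⟩ := hasGPResolution_succ_iff.mp hm
    obtain ⟨C', hC', ⟨s⟩⟩ := hC.exists_syzygy
    have := s.projective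
    obtain ⟨K, κ, π, α, β, hκπ, hαβ⟩ := hfg.exists_horseshoe_syzygy hA s.isShortExact
    have hGP : XGorensteinProjective R 𝒳 (ModuleCat.of R (G × s.P)) :=
      XGorensteinProjective.of_isShortExact h𝒳 isShortExact_inl_snd hG
        (xGorensteinProjective_of_projective s.P)
    exact hκπ.xGpd_ne_top_right_of_xGorensteinProjective hGP (ih hαβ hC' hL)

theorem IsShortExact.xGpd_ne_top_mid_of_hasGPResolution (k : ℕ) :
    ∀ ⦃A B C : ModuleCat.{u} R⦄ {f : A →ₗ[R] B} {g : B →ₗ[R] C}, IsShortExact f g →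
      xGpd R 𝒳 A ≠ ⊤ → HasGPResolution 𝒳 k C → xGpd R 𝒳 B ≠ ⊤ := by
  induction k with
  | zero => exact fun A B C f g hfg hA hC =>
      hfg.xGpd_ne_top_mid_of_xGorensteinProjective h𝒳 hA (hasGPResolution_zero_iff.mp hC)
  | succ k ih =>
    intro A B C f g hfg hA hC
    obtain ⟨L, G, ι, p, hG, hιp, hL⟩ := hasGPResolution_succ_iff.mp hC
    obtain ⟨X, a, q, l, r, haq, hlr⟩ := hfg.exists_pullback hιp
    exact hlr.xGpd_ne_top_right_of_hasGPResolution ih hL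
      (haq.xGpd_ne_top_mid_of_xGorensteinProjective h𝒳 hA hG)

theorem IsShortExact.xGpd_ne_top_mid (hfg : IsShortExact f g) (hA : xGpd R 𝒳 A ≠ ⊤)
    (hC : xGpd R 𝒳 C ≠ ⊤) : xGpd R 𝒳 B ≠ ⊤ :=
  let ⟨k, hk⟩ := xGpd_ne_top_iff.mp hC
  xGpd_ne_top_mid_of_hasGPResolution h𝒳 k hfg hA hk

theorem IsShortExact.xGpd_ne_top_right (hfg : IsShortExact f g) (hA : xGpd R 𝒳 A ≠ ⊤)
    (hB : xGpd R 𝒳 B ≠ ⊤) : xGpd R 𝒳 C ≠ ⊤ :=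
  let ⟨k, hk⟩ := xGpd_ne_top_iff.mp hA
  hfg.xGpd_ne_top_right_of_hasGPResolution (xGpd_ne_top_mid_of_hasGPResolution h𝒳 k) hk hB

theorem exists_isShortExact_projective_of_xGpd_ne_top (hC : xGpd R 𝒳 C ≠ ⊤) :
    ∃ (L Q : ModuleCat.{u} R) (ι : L →ₗ[R] Q) (p : Q →ₗ[R] C),
      Module.Projective R Q ∧ xGpd R 𝒳 L ≠ ⊤ ∧ IsShortExact ι p := by
  obtain ⟨L, G, ι, p, hG, hL, hιp⟩ := exists_isShortExact_of_xGpd_ne_top hC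
  obtain ⟨G', hG', ⟨s⟩⟩ := hG.exists_syzygy
  obtain ⟨j, r, hjr, -⟩ := hιp.exists_isShortExact_ker_comp s.isShortExact
  exact ⟨ModuleCat.of R _, s.P, _, p ∘ₗ s.π, s.projective,
    hjr.xGpd_ne_top_mid (B := ModuleCat.of R _) h𝒳 hG'.xGpd_ne_top hL,
    isShortExact_subtype_ker (g := p ∘ₗ s.π) (hιp.surjective.comp s.isShortExact.surjective)⟩

theorem IsShortExact.xGpd_ne_top_left (hfg : IsShortExact f g) (hB : xGpd R 𝒳 B ≠ ⊤)
    (hC : xGpd R 𝒳 C ≠ ⊤) : xGpd R 𝒳 A ≠ ⊤ := by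
  obtain ⟨L, Q, ι, p, hQ, hL, hιp⟩ := exists_isShortExact_projective_of_xGpd_ne_top h𝒳 hC
  obtain ⟨X, a, q, l, r, haq, hlr⟩ := hfg.exists_pullback hιp
  obtain ⟨s, t, hst⟩ := haq.exists_swap_of_projective
  exact hst.xGpd_ne_top_right h𝒳 (xGorensteinProjective_of_projective Q).xGpd_ne_top
    (hlr.xGpd_ne_top_mid h𝒳 hL hB)

end FiniteDimension

/-- In a short exact sequence `0 → A → B → C → 0`, if two of `A`, `B`, `C` have
finite `𝒳`-Gorenstein projective dimension, then so does the third. -/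
theorem xGpd_finite_two_of_three
    (R : Type u) [Ring R] (𝒳 : ModuleCat.{u} R → Prop)
    (h𝒳 : ∀ P : ModuleCat.{u} R, Module.Projective R P → 𝒳 P)
    (A B C : ModuleCat.{u} R) (f : A →ₗ[R] B) (g : B →ₗ[R] C)
    (hf : Function.Injective f) (hg : Function.Surjective g)
    (hfg : Function.Exact f g) :
    (xGpd R 𝒳 A ≠ ⊤ → xGpd R 𝒳 C ≠ ⊤ → xGpd R 𝒳 B ≠ ⊤) ∧
    (xGpd R 𝒳 A ≠ ⊤ → xGpd R 𝒳 B ≠ ⊤ → xGpd R 𝒳 C ≠ ⊤) ∧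
    (xGpd R 𝒳 B ≠ ⊤ → xGpd R 𝒳 C ≠ ⊤ → xGpd R 𝒳 A ≠ ⊤) := by
  have hses : IsShortExact f g := ⟨hf, hg, hfg⟩
  exact ⟨hses.xGpd_ne_top_mid h𝒳, hses.xGpd_ne_top_right h𝒳, hses.xGpd_ne_top_left h𝒳⟩
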